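/- Let α : J → ℝ⁴ satisfy ⟨α,α⟩ = ⟨α',α'⟩ = 0 with V_t = span{α(t),α'(t)} two-dimensional, and let a : J → ℝ be smooth and nowhere zero, L : J → ℝ smooth, and η satisfy ⟨η',α''⟩ = (2a' - aL)/a² and ⟨η',α'⟩ = -1/a, ⟨α,η'⟩ = 0. Then α''(t) = A(t)α(t) + ((a(t)L(t) - 2a'(t))/a(t))α'(t) for some smooth function A. -/

import Mathlib

/-- The neutral bilinear form of `E⁴₂` on `ℝ⁴`. -/
def neutralForm (x y : Fin 4 → ℝ) : ℝ :=
  -(x 0 * y 0) - x 1 * y 1 + x 2 * y 2 + x 3 * y 3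

noncomputable def nB : LinearMap.BilinForm ℝ (Fin 4 → ℝ) :=
  LinearMap.mk₂ ℝ neutralForm
    (by intros; simp [neutralForm]; ring)
    (by intros; simp [neutralForm]; ring)
    (by intros; simp [neutralForm]; ring)
    (by intros; simp [neutralForm]; ring)

lemma nB_apply (x y : Fin 4 → ℝ) : nB x y = neutralForm x y := rfl

lemma nf_symm (x y : Fin 4 → ℝ) : neutralForm x y = neutralForm y x := by
  simp [neutralForm]; ring

lemma nB_refl : nB.IsRefl := by
  intro x y h
  rwa [nB_apply, nf_symm, ← nB_apply] at h

lemma nB_nondeg : nB.Nondegenerate := by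
  refine nB_refl.nondegenerate_iff_separatingLeft.mpr ?_
  intro x h
  funext i
  fin_cases i <;>
  · first
    | (have := h (Pi.single 0 1); simp [nB_apply, neutralForm, Pi.single_apply] at this; simpa using this)
    | (have := h (Pi.single 1 1); simp [nB_apply, neutralForm, Pi.single_apply] at this; simpa using this)
    | (have := h (Pi.single 2 1); simp [nB_apply, neutralForm, Pi.single_apply] at this; simpa using this)
    | (have := h (Pi.single 3 1); simp [nB_apply, neutralForm, Pi.single_apply] at this; simpa using this)

lemma hasDerivAt_nf {f g : ℝ → Fin 4 → ℝ} (hf : ContDiff ℝ (⊤ : ℕ∞) f) (hg : ContDiff ℝ (⊤ : ℕ∞) g) (t : ℝ) :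
    HasDerivAt (fun s => neutralForm (f s) (g s))
      (neutralForm (deriv f t) (g t) + neutralForm (f t) (deriv g t)) t := by
  have hf' : ∀ i, HasDerivAt (fun s => f s i) (deriv f t i) t :=
    hasDerivAt_pi.1 (hf.differentiable (by simp) t).hasDerivAt
  have hg' : ∀ i, HasDerivAt (fun s => g s i) (deriv g t i) t :=
    hasDerivAt_pi.1 (hg.differentiable (by simp) t).hasDerivAt
  have h := (((((hf' 0).mul (hg' 0)).neg.sub ((hf' 1).mul (hg' 1))).add
      ((hf' 2).mul (hg' 2))).add ((hf' 3).mul (hg' 3)))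
  exact h.congr_deriv (by simp [neutralForm]; ring)

lemma range_pair (x y : Fin 4 → ℝ) : Set.range ![x, y] = {x, y} := by
  simp [Matrix.range_cons, Matrix.range_empty, Set.pair_comm]

lemma mem_span_of_orth {x y z : Fin 4 → ℝ}
    (hli : LinearIndependent ℝ ![x, y])
    (hxx : neutralForm x x = 0) (hyy : neutralForm y y = 0) (hxy : neutralForm x y = 0)
    (hxz : neutralForm x z = 0) (hyz : neutralForm y z = 0) :
    z ∈ Submodule.span ℝ ({x, y} : Set (Fin 4 → ℝ)) := by
  set W : Submodule ℝ (Fin 4 → ℝ) := Submodule.span ℝ ({x, y} : Set (Fin 4 → ℝ)) with hW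
  have key : ∀ v, neutralForm x v = 0 → neutralForm y v = 0 → v ∈ nB.orthogonal W := by
    intro v h1 h2 n hn
    have hle : W ≤ LinearMap.ker (nB.flip v) := by
      rw [hW, Submodule.span_le]
      rintro u hu
      simp only [Set.mem_insert_iff, Set.mem_singleton_iff] at hu
      rcases hu with rfl | rfl <;>
        simp [LinearMap.mem_ker, nB_apply, h1, h2]
    exact hle hn
  have hxW : x ∈ W := Submodule.subset_span (by simp)
  have hyW : y ∈ W := Submodule.subset_span (by simp)
  have hWle : W ≤ nB.orthogonal W := by
    rw [hW, Submodule.span_le]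
    rintro u hu
    simp only [Set.mem_insert_iff, Set.mem_singleton_iff] at hu
    rcases hu with rfl | rfl
    · exact key _ hxx (by rw [nf_symm]; exact hxy)
    · exact key _ hxy hyy
  have hr : Module.finrank ℝ W = 2 := by
    rw [hW, ← range_pair x y, finrank_span_eq_card hli]
    simp
  have horth : Module.finrank ℝ (nB.orthogonal W) = 2 := by
    rw [LinearMap.BilinForm.finrank_orthogonal nB_nondeg, hr]
    simp
  have hEq : W = nB.orthogonal W :=
    Submodule.eq_of_le_of_finrank_le hWle (by rw [horth, hr])
  rw [hW] at hEq ⊢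
  rw [hEq]
  exact key z hxz hyz

lemma deriv_contDiff_top {E : Type*} [NormedAddCommGroup E] [NormedSpace ℝ E]
    {f : ℝ → E} (hf : ContDiff ℝ (⊤ : ℕ∞) f) : ContDiff ℝ (⊤ : ℕ∞) (deriv f) := by
  have h := (contDiff_succ_iff_deriv (n := ((⊤ : ℕ∞) : WithTop ℕ∞)) (f := f)).mp
    (by simpa using hf)
  exact h.2.2

/-- Under the isotropy conditions on `α`, the two-dimensionality of
`span{α, α'}` and the pairing conditions on `η`, one has
`α'' = A α + ((aL - 2a')/a) α'` for some smooth function `A`. -/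
theorem second_derivative_decomposition
    (α η : ℝ → (Fin 4 → ℝ)) (a L : ℝ → ℝ)
    (hα : ContDiff ℝ (⊤ : ℕ∞) α) (hη : ContDiff ℝ (⊤ : ℕ∞) η)
    (ha : ContDiff ℝ (⊤ : ℕ∞) a) (hL : ContDiff ℝ (⊤ : ℕ∞) L)
    (ha0 : ∀ t, a t ≠ 0)
    (hαcone : ∀ t, neutralForm (α t) (α t) = 0)
    (hαnull : ∀ t, neutralForm (deriv α t) (deriv α t) = 0)
    (hdim : ∀ t, LinearIndependent ℝ ![α t, deriv α t])
    (hη2 : ∀ t, neutralForm (α t) (deriv η t) = 0)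
    (hη3 : ∀ t, neutralForm (deriv η t) (deriv α t) = -(1 / a t))
    (hη4 : ∀ t, neutralForm (deriv η t) (deriv (deriv α) t) =
      (2 * deriv a t - a t * L t) / (a t) ^ 2) :
    ∃ A : ℝ → ℝ, ContDiff ℝ (⊤ : ℕ∞) A ∧
      ∀ t, deriv (deriv α) t =
        A t • α t + ((a t * L t - 2 * deriv a t) / a t) • deriv α t := by
  have hα' : ContDiff ℝ (⊤ : ℕ∞) (deriv α) := deriv_contDiff_top hα
  have hα'' : ContDiff ℝ (⊤ : ℕ∞) (deriv (deriv α)) := deriv_contDiff_top hα'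
  have ha' : ContDiff ℝ (⊤ : ℕ∞) (deriv a) := deriv_contDiff_top ha
  -- step 1 : ⟨α, α'⟩ = 0
  have s1 : ∀ t, neutralForm (α t) (deriv α t) = 0 := by
    intro t
    have h := hasDerivAt_nf hα hα t
    rw [show (fun s => neutralForm (α s) (α s)) = fun _ => (0 : ℝ) from funext hαcone] at h
    have hD := h.unique (hasDerivAt_const t (0 : ℝ))
    have hs := nf_symm (deriv α t) (α t)
    linarith
  -- step 2 : ⟨α, α''⟩ = 0
  have s2 : ∀ t, neutralForm (α t) (deriv (deriv α) t) = 0 := by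
    intro t
    have h := hasDerivAt_nf hα hα' t
    rw [show (fun s => neutralForm (α s) (deriv α s)) = fun _ => (0 : ℝ) from funext s1] at h
    have hD := h.unique (hasDerivAt_const t (0 : ℝ))
    have := hαnull t
    linarith
  -- step 3 : ⟨α', α''⟩ = 0
  have s3 : ∀ t, neutralForm (deriv α t) (deriv (deriv α) t) = 0 := by
    intro t
    have h := hasDerivAt_nf hα' hα' t
    rw [show (fun s => neutralForm (deriv α s) (deriv α s)) = fun _ => (0 : ℝ) from
      funext hαnull] at h
    have hD := h.unique (hasDerivAt_const t (0 : ℝ))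
    have hs := nf_symm (deriv (deriv α) t) (deriv α t)
    linarith
  set c : ℝ → ℝ := fun t => (a t * L t - 2 * deriv a t) / a t with hc_def
  -- membership and second coefficient
  have key : ∀ t, ∃ c₁ : ℝ, deriv (deriv α) t = c₁ • α t + c t • deriv α t := by
    intro t
    obtain ⟨c₁, c₂, hc⟩ := Submodule.mem_span_pair.1
      (mem_span_of_orth (hdim t) (hαcone t) (hαnull t) (s1 t) (s2 t) (s3 t))
    refine ⟨c₁, ?_⟩
    have hpair : neutralForm (deriv η t) (deriv (deriv α) t) =
        c₁ * neutralForm (deriv η t) (α t) + c₂ * neutralForm (deriv η t) (deriv α t) := by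
      rw [← hc]
      simp only [← nB_apply, map_add, map_smul, smul_eq_mul]
    rw [hη4 t, hη3 t, nf_symm (deriv η t) (α t), hη2 t] at hpair
    have hc₂ : c₂ = c t := by
      have h1 := ha0 t
      field_simp at hpair
      have h3 : a t * (a t * c₂) = a t * (a t * L t - 2 * deriv a t) := by
        linear_combination (a t) * hpair
      have h2 := mul_left_cancel₀ h1 h3
      rw [hc_def]
      field_simp
      linear_combination h2
    rw [← hc, hc₂]
  -- the explicit smooth coefficient A
  have comp : ∀ (f : ℝ → Fin 4 → ℝ), ContDiff ℝ (⊤ : ℕ∞) f → ∀ i : Fin 4,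
      ContDiff ℝ (⊤ : ℕ∞) (fun t => f t i) := fun f hf i =>
    (ContinuousLinearMap.proj (R := ℝ) (φ := fun _ : Fin 4 => ℝ) i).contDiff.comp hf
  have hden : ∀ t, (∑ i, (α t i) ^ 2) ≠ 0 := by
    intro t
    have hα0 : α t ≠ 0 := by
      have := (hdim t).ne_zero 0
      simpa using this
    obtain ⟨i, hi⟩ := Function.ne_iff.1 hα0
    have : (0 : ℝ) < ∑ i, (α t i) ^ 2 :=
      Finset.sum_pos' (fun j _ => sq_nonneg _)
        ⟨i, Finset.mem_univ i, by
          have h2 : α t i ≠ 0 := by simpa using hi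
          exact lt_of_le_of_ne (sq_nonneg _) (Ne.symm (pow_ne_zero 2 h2))⟩
    exact ne_of_gt this
  set A : ℝ → ℝ := fun t =>
    (∑ i, (deriv (deriv α) t i - c t * deriv α t i) * α t i) / (∑ i, (α t i) ^ 2) with hA_def
  have hc_smooth : ContDiff ℝ (⊤ : ℕ∞) c := ((ha.mul hL).sub (contDiff_const.mul ha')).div ha ha0
  have hA : ContDiff ℝ (⊤ : ℕ∞) A := by
    apply ContDiff.div
    · exact ContDiff.sum fun i _ =>
        ((comp _ hα'' i).sub (hc_smooth.mul (comp _ hα' i))).mul (comp _ hα i)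
    · exact ContDiff.sum fun i _ => (comp _ hα i).pow 2
    · exact hden
  refine ⟨A, hA, fun t => ?_⟩
  obtain ⟨c₁, hc₁⟩ := key t
  have hcoord : ∀ i, deriv (deriv α) t i - c t * deriv α t i = c₁ * α t i := by
    intro i
    have := congrFun hc₁ i
    simp only [Pi.add_apply, Pi.smul_apply, smul_eq_mul] at this
    linarith
  have hAt : A t = c₁ := by
    rw [hA_def]
    simp only [hcoord]
    have : (∑ i, c₁ * α t i * α t i) = c₁ * ∑ i, (α t i) ^ 2 := by
      rw [Finset.mul_sum]
      exact Finset.sum_congr rfl fun i _ => by ring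
    rw [this, mul_div_assoc, div_self (hden t), mul_one]
  rw [show ((a t * L t - 2 * deriv a t) / a t) = c t from rfl, hAt]
  exact hc₁
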